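/- arXiv:2303.08771 — 4 statements merged into one kernel-verified Lean document; each statement's English description precedes it below -/
import Mathlib

section
/- If f is an acyclic proper vertex coloring of a simple graph G with colors in the group Z_k (no cycle receives only 2 colors), then the edge coloring g defined by g(uv) = f(u) + f(v) (addition in Z_k) has no monochromatic broken cycle. Consequently, the strong arboricity ζ(G) is at most the acyclic chromatic number χ_a(G). -/
open SimpleGraph

/-- A walk is monochromatic under an edge coloring if all its edges get one color. -/
def Monochromatic {V α : Type*} {G : SimpleGraph V} {u v : V}
    (c : Sym2 V → α) (p : G.Walk u v) : Prop :=
  ∃ a, ∀ e ∈ p.edges, c e = a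

/-- An edge coloring is strongly woody if no broken cycle (a path of length ≥ 2 whose
endpoints are adjacent, i.e. a cycle minus one edge) is monochromatic. -/
def StronglyWoody {V α : Type*} (G : SimpleGraph V) (c : Sym2 V → α) : Prop :=
  ∀ ⦃u v : V⦄ (p : G.Walk u v), p.IsPath → 2 ≤ p.length → G.Adj u v →
    ¬ Monochromatic c p

/-- The strong arboricity: least number of colors in a strongly woody edge coloring. -/
noncomputable def strongArboricity {V : Type*} (G : SimpleGraph V) : ℕ :=
  sInf {k | ∃ c : Sym2 V → Fin k, StronglyWoody G c}

/-- An edge coloring is woody if no cycle is monochromatic (each color class is a forest). -/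
def Woody {V α : Type*} (G : SimpleGraph V) (c : Sym2 V → α) : Prop :=
  ∀ ⦃u : V⦄ (p : G.Walk u u), p.IsCycle → ¬ Monochromatic c p

/-- The arboricity: least number of colors in a woody edge coloring. -/
noncomputable def arboricity {V : Type*} (G : SimpleGraph V) : ℕ :=
  sInf {k | ∃ c : Sym2 V → Fin k, Woody G c}

/-- A proper vertex coloring. -/
def ProperColoring {V α : Type*} (G : SimpleGraph V) (f : V → α) : Prop :=
  ∀ ⦃u v : V⦄, G.Adj u v → f u ≠ f v

/-- An acyclic coloring: proper and no cycle uses at most two colors. -/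
def AcyclicColoring {V α : Type*} (G : SimpleGraph V) (f : V → α) : Prop :=
  ProperColoring G f ∧
    ∀ ⦃u : V⦄ (p : G.Walk u u), p.IsCycle →
      ¬ ∃ a b, ∀ x ∈ p.support, f x = a ∨ f x = b

/-- The acyclic chromatic number. -/
noncomputable def acyclicChromaticNumber {V : Type*} (G : SimpleGraph V) : ℕ :=
  sInf {k | ∃ f : V → Fin k, AcyclicColoring G f}

/-- The chromatic number (least number of colors in a proper vertex coloring). -/
noncomputable def chromNum {V : Type*} (G : SimpleGraph V) : ℕ :=
  sInf {k | ∃ f : V → Fin k, ProperColoring G f}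

/-- A proper edge coloring: adjacent edges receive distinct colors. -/
def ProperEdgeColoring {V α : Type*} (G : SimpleGraph V) (c : Sym2 V → α) : Prop :=
  ∀ ⦃u v w : V⦄, G.Adj u v → G.Adj v w → u ≠ w → c s(u, v) ≠ c s(v, w)

/-- The chromatic index: least number of colors in a proper edge coloring. -/
noncomputable def edgeChromNum {V : Type*} (G : SimpleGraph V) : ℕ :=
  sInf {k | ∃ c : Sym2 V → Fin k, ProperEdgeColoring G c}

/-- The 2-arboricity: least number of colors so that every cycle C receives at least
min{|C|, 3} colors. -/
noncomputable def arboricity2 {V : Type*} (G : SimpleGraph V) : ℕ :=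
  sInf {k | ∃ c : Sym2 V → Fin k, ∀ ⦃u : V⦄ (p : G.Walk u u), p.IsCycle →
    min p.length 3 ≤ (p.edges.map c).toFinset.card}

/-- `H` is a minor of `G`: there are disjoint nonempty connected branch sets in `G`,
one for each vertex of `H`, with an edge of `G` between the branch sets of any two
adjacent vertices of `H`. -/
def IsMinorOf {W V : Type*} (H : SimpleGraph W) (G : SimpleGraph V) : Prop :=
  ∃ φ : W → Set V,
    (∀ w, (φ w).Nonempty) ∧
    (∀ w, (G.induce (φ w)).Connected) ∧
    (Pairwise fun w w' => Disjoint (φ w) (φ w')) ∧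
    (∀ ⦃w w'⦄, H.Adj w w' → ∃ a ∈ φ w, ∃ b ∈ φ w', G.Adj a b)

/-- Wagner's characterization: planar = no K₅ minor and no K₃,₃ minor. -/
def Planar {V : Type*} (G : SimpleGraph V) : Prop :=
  ¬ IsMinorOf (completeGraph (Fin 5)) G ∧
    ¬ IsMinorOf (completeBipartiteGraph (Fin 3) (Fin 3)) G

/-- Outerplanar = no K₄ minor and no K₂,₃ minor. -/
def Outerplanar {V : Type*} (G : SimpleGraph V) : Prop :=
  ¬ IsMinorOf (completeGraph (Fin 4)) G ∧
    ¬ IsMinorOf (completeBipartiteGraph (Fin 2) (Fin 3)) G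

private lemma alt_colors {V : Type*} {k : ℕ} {G : SimpleGraph V} (f : V → ZMod k) (a : ZMod k) :
    ∀ {u v : V} (p : G.Walk u v),
      (∀ e ∈ p.edges,
        Sym2.lift ⟨fun x y => f x + f y, fun x y => add_comm (f x) (f y)⟩ e = a) →
      ∀ x ∈ p.support, f x = f u ∨ f x = a - f u := by
  intro u v p
  induction p with
  | nil =>
    intro _ x hx
    simp only [Walk.support_nil, List.mem_singleton] at hx
    subst hx; left; rfl
  | @cons u w v h q ih =>
    intro hc x hx
    have h1 : f u + f w = a := by
      have := hc s(u, w) (by simp)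
      simpa using this
    have hw : f w = a - f u := by
      rw [eq_sub_iff_add_eq, add_comm]; exact h1
    simp only [Walk.support_cons, List.mem_cons] at hx
    rcases hx with rfl | hx
    · left; rfl
    · have := ih (fun e he => hc e (by simp [he])) x hx
      rw [hw] at this
      rcases this with h2 | h2
      · right; exact h2
      · left; rw [h2, sub_sub_cancel]

/-- If `f` is an acyclic proper coloring with colors in `ZMod k`, the derived edge
coloring `g(uv) = f u + f v` has no monochromatic broken cycle; consequently
ζ(G) ≤ χₐ(G). -/
theorem stmt0 {V : Type*} [Fintype V] (G : SimpleGraph V) :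
    (∀ (k : ℕ) (f : V → ZMod k), AcyclicColoring G f →
      StronglyWoody G
        (Sym2.lift ⟨fun u v => f u + f v, fun u v => add_comm (f u) (f v)⟩)) ∧
    strongArboricity G ≤ acyclicChromaticNumber G := by
  have main : ∀ (k : ℕ) (f : V → ZMod k), AcyclicColoring G f →
      StronglyWoody G
        (Sym2.lift ⟨fun u v => f u + f v, fun u v => add_comm (f u) (f v)⟩) := by
    intro k f hf u v p hpath hlen hadj hmono
    obtain ⟨a, ha⟩ := hmono
    -- the edge uv is not in p
    have hne : s(u, v) ∉ p.edges := by
      intro hmem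
      cases p with
      | nil => simp at hlen
      | @cons _ w _ h q =>
        simp only [Walk.edges_cons, List.mem_cons] at hmem
        rcases hmem with heq | hmem
        · rw [Sym2.eq_iff] at heq
          rcases heq with ⟨-, rfl⟩ | ⟨rfl, rfl⟩
          · -- w = v, so q is a path from v to v of positive length
            have hq : q.IsPath := ((Walk.cons_isPath_iff h q).mp hpath).1
            have hqe : q = Walk.nil :=
              congrArg Subtype.val (SimpleGraph.Path.loop_eq (⟨q, hq⟩ : G.Path _ _))
            subst hqe
            simp at hlen
          · exact G.ne_of_adj h rfl
        · have hu : u ∈ q.support := q.fst_mem_support_of_mem_edges hmem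
          exact ((Walk.cons_isPath_iff h q).mp hpath).2 hu
    -- build the cycle
    have hrev : s(u, v) ∉ p.reverse.edges := by
      rw [Walk.edges_reverse, List.mem_reverse]
      exact hne
    have hcyc : (Walk.cons hadj p.reverse).IsCycle :=
      (Walk.cons_isCycle_iff p.reverse hadj).mpr ⟨hpath.reverse, hrev⟩
    refine hf.2 (Walk.cons hadj p.reverse) hcyc ⟨f u, a - f u, ?_⟩
    intro x hx
    simp only [Walk.support_cons, List.mem_cons, Walk.support_reverse,
      List.mem_reverse] at hx
    rcases hx with rfl | hx
    · exact Or.inl rfl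
    · exact alt_colors f a p ha x hx
  refine ⟨main, ?_⟩
  -- the acyclic set is nonempty
  classical
  have hne : {k | ∃ f : V → Fin k, AcyclicColoring G f}.Nonempty := by
    refine ⟨Fintype.card V, (Fintype.equivFin V : V ≃ Fin (Fintype.card V)), ?_, ?_⟩
    · intro x y hxy h
      exact G.ne_of_adj hxy ((Fintype.equivFin V).injective h)
    · intro u p hp ⟨a, b, hab⟩
      have h3 : 3 ≤ p.length := hp.three_le_length
      have hnodup : p.support.tail.Nodup := hp.2
      have hlen : p.support.tail.length = p.length := by
        have := p.length_support
        simp [List.length_tail, this]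
      -- the image of support.tail under the equiv has card ≥ 3 but ⊆ {a, b}
      set e := Fintype.equivFin V
      have hsub : p.support.tail.toFinset.image e ⊆ {a, b} := by
        intro c hc
        simp only [Finset.mem_image, List.mem_toFinset] at hc
        obtain ⟨x, hx, rfl⟩ := hc
        have : x ∈ p.support := List.mem_of_mem_tail hx
        rcases hab x this with h | h <;> simp [h]
      have hcard : p.support.tail.toFinset.card = p.length := by
        rw [List.toFinset_card_of_nodup hnodup, hlen]
      have : p.length ≤ 2 := by
        calc p.length = (p.support.tail.toFinset.image e).card := by
              rw [Finset.card_image_of_injective _ e.injective, hcard]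
          _ ≤ ({a, b} : Finset (Fin (Fintype.card V))).card := Finset.card_le_card hsub
          _ ≤ 2 := Finset.card_insert_le _ _ |>.trans (by simp)
      omega
  have trans : ∀ m : ℕ, (∃ f : V → Fin m, AcyclicColoring G f) →
      ∃ c : Sym2 V → Fin m, StronglyWoody G c := by
    intro m
    match m with
    | 0 =>
      rintro ⟨f, -⟩
      have hV : IsEmpty V := ⟨fun v => (f v).elim0⟩
      refine ⟨Sym2.lift ⟨fun u _ => (hV.false u).elim, fun u _ => by
        exact (hV.false u).elim⟩, ?_⟩
      intro u v p _ _ _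
      exact (hV.false u).elim
    | n + 1 =>
      rintro ⟨f, hf⟩
      exact ⟨Sym2.lift ⟨fun u v => f u + f v, fun u v => add_comm (f u) (f v)⟩,
        main (n + 1) f hf⟩
  exact Nat.sInf_le (trans _ (Nat.sInf_mem hne))
end

section
/- Every outerplanar graph G satisfies ζ(G) ≤ 3. -/
open SimpleGraph

/-!
An acyclic 3-colouring `f` of `G` gives a strongly woody 3-edge-colouring: colour the edge `ab`
with the colour missing from `{f a, f b}`. No vertex of a broken cycle of colour `m` has colour
`m`, so closing it up gives a cycle on two colours.

Outerplanar graphs have no `K₄` minor, and `K₄`-minor-free graphs have acyclic 3-colourings. By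
Dirac's theorem such a graph has a vertex `v` with at most two neighbours; contract `v` into a
neighbour, which makes the neighbours of `v` adjacent, colour the smaller graph, and give `v` the
third colour.
-/

namespace SimpleGraph

variable {V W : Type*}

lemma connected_induce_biUnion {G' : SimpleGraph W} {G : SimpleGraph V} {S : Set W}
    {ψ : W → Set V} (hS : (G'.induce S).Connected)
    (hψ : ∀ x ∈ S, (G.induce (ψ x)).Connected)
    (hadj : ∀ x ∈ S, ∀ y ∈ S, G'.Adj x y → ∃ a ∈ ψ x, ∃ b ∈ ψ y, G.Adj a b) :
    (G.induce (⋃ x ∈ S, ψ x)).Connected := by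
  have hsub : ∀ x ∈ S, ψ x ⊆ ⋃ x ∈ S, ψ x := fun x hx => Set.subset_biUnion_of_mem hx
  have within : ∀ x (hx : x ∈ S) a b (ha : a ∈ ψ x) (hb : b ∈ ψ x),
      (G.induce (⋃ x ∈ S, ψ x)).Reachable ⟨a, hsub x hx ha⟩ ⟨b, hsub x hx hb⟩ :=
    fun x hx a b ha hb =>
      ((hψ x hx).preconnected ⟨a, ha⟩ ⟨b, hb⟩).map (G.induceHomOfLE (hsub x hx)).toHom
  have across : ∀ x y : S, (G'.induce S).Reachable x y →
      ∀ a (ha : a ∈ ψ x) b (hb : b ∈ ψ y),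
        (G.induce (⋃ x ∈ S, ψ x)).Reachable ⟨a, hsub x x.2 ha⟩ ⟨b, hsub y y.2 hb⟩ := by
    intro x y hxy
    rw [reachable_iff_reflTransGen] at hxy
    induction hxy with
    | refl => exact fun a ha b hb => within x x.2 a b ha hb
    | @tail y z _ hyz ih =>
      intro a ha c hc
      obtain ⟨b, hb, c', hc', hbc'⟩ := hadj y y.2 z z.2 hyz
      exact (ih a ha b hb).trans
        ((Adj.reachable (by exact hbc')).trans (within z z.2 c' c hc' hc))
  rw [connected_iff]
  refine ⟨?_, ?_⟩
  · rintro ⟨a, ha⟩ ⟨b, hb⟩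
    obtain ⟨x, hx, hax⟩ := Set.mem_iUnion₂.mp ha
    obtain ⟨y, hy, hby⟩ := Set.mem_iUnion₂.mp hb
    exact across ⟨x, hx⟩ ⟨y, hy⟩ (hS.preconnected _ _) a hax b hby
  · obtain ⟨⟨x, hx⟩⟩ := hS.nonempty
    obtain ⟨⟨a, ha⟩⟩ := (hψ x hx).nonempty
    exact ⟨⟨a, hsub x hx ha⟩⟩

lemma connected_induce_image_val {G : SimpleGraph V} {s : Set V} {S : Set s}
    (h : ((G.induce s).induce S).Connected) : (G.induce (Subtype.val '' S)).Connected := by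
  let f : (G.induce s).induce S →g G.induce (Subtype.val '' S) :=
    ⟨fun x => ⟨x.1.1, x.1, x.2, rfl⟩, fun h => h⟩
  have hf : Function.Surjective f := by
    rintro ⟨_, x, hx, rfl⟩
    exact ⟨⟨x, hx⟩, rfl⟩
  exact (connected_iff _).mpr ⟨h.preconnected.map f hf, h.nonempty.map f⟩

/-- `v` merged into `u`: the neighbours of `v` become neighbours of `u`. When `u` and `v` are
adjacent this is the contraction of the edge `uv`. -/
def contract (G : SimpleGraph V) (u v : V) : SimpleGraph ({v}ᶜ : Set V) :=
  (G ⊔ fromRel fun a b => a = u ∧ G.Adj v b).induce {v}ᶜ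

variable {G : SimpleGraph V} {u v : V}

@[simp]
lemma contract_adj {a b : ({v}ᶜ : Set V)} :
    (G.contract u v).Adj a b ↔
      G.Adj a b ∨ ((a : V) ≠ b ∧ ((a = u ∧ G.Adj v b) ∨ (b = u ∧ G.Adj v a))) := by
  simp [contract]

lemma induce_le_contract : G.induce {v}ᶜ ≤ G.contract u v :=
  fun _ _ h => contract_adj.mpr (Or.inl h)

namespace Walk

variable {a : V}

lemma IsCycle.exists_adj_adj_of_mem_support {p : G.Walk a a} (hp : p.IsCycle)
    (hv : v ∈ p.support) :
    ∃ b b', b ≠ b' ∧ G.Adj v b ∧ G.Adj v b' ∧ b ∈ p.support ∧ b' ∈ p.support := by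
  classical
  have hq := hp.rotate hv
  refine ⟨_, _, hq.snd_ne_penultimate, adj_snd hq.not_nil, (adj_penultimate hq.not_nil).symm,
    ?_, ?_⟩ <;> exact (p.mem_support_rotate_iff v hv).mp (getVert_mem_support _ _)

lemma IsCycle.exists_isCycle_of_induce_le {s : Set V} {G' : SimpleGraph s}
    (hle : G.induce s ≤ G') {p : G.Walk a a} (hp : p.IsCycle)
    (hs : ∀ x ∈ p.support, x ∈ s) :
    ∃ (b : s) (q : G'.Walk b b), q.IsCycle ∧ ∀ x ∈ q.support, (x : V) ∈ p.support := by
  refine ⟨_, (p.induce s hs).mapLe hle, IsCycle.mapLe hle ?_, fun x hx => ?_⟩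
  · rwa [← isCycle_map_iff_of_injective (f := (Embedding.induce (G := G) s).toHom)
      (Embedding.induce (G := G) s).injective, map_induce]
  · rwa [support_mapLe_eq_support, support_induce, List.mem_attachWith] at hx

end Walk

end SimpleGraph

section Minors

variable {U V W : Type*}

theorem IsMinorOf.trans {F : SimpleGraph U} {H : SimpleGraph W} {G : SimpleGraph V}
    (h₁ : IsMinorOf F H) (h₂ : IsMinorOf H G) : IsMinorOf F G := by
  obtain ⟨φ, hφne, hφconn, hφdisj, hφadj⟩ := h₁
  obtain ⟨ψ, hψne, hψconn, hψdisj, hψadj⟩ := h₂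
  refine ⟨fun w => ⋃ x ∈ φ w, ψ x, fun w => ?_, fun w => ?_, fun w w' hw => ?_,
    fun w w' hw => ?_⟩
  · obtain ⟨x, hx⟩ := hφne w
    obtain ⟨a, ha⟩ := hψne x
    exact ⟨a, Set.mem_biUnion hx ha⟩
  · exact connected_induce_biUnion (hφconn w) (fun x _ => hψconn x)
      (fun x _ y _ hxy => hψadj hxy)
  · simp only [Set.disjoint_iUnion_left, Set.disjoint_iUnion_right]
    intro y hy x hx
    exact hψdisj (by rintro rfl; exact Set.disjoint_left.mp (hφdisj hw) hx hy)
  · obtain ⟨x, hx, y, hy, hxy⟩ := hφadj hw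
    obtain ⟨a, ha, b, hb, hab⟩ := hψadj hxy
    exact ⟨a, Set.mem_biUnion hx ha, b, Set.mem_biUnion hy hb, hab⟩

theorem isMinorOf_induce (G : SimpleGraph V) (s : Set V) : IsMinorOf (G.induce s) G := by
  refine ⟨fun w => {w.1}, fun w => Set.singleton_nonempty _, fun w => .of_subsingleton,
    fun w w' hw => ?_, fun w w' hw => ⟨_, rfl, _, rfl, hw⟩⟩
  exact Set.disjoint_singleton.mpr (Subtype.val_injective.ne hw)

theorem isMinorOf_contract {G : SimpleGraph V} {u v : V} (h : G.Adj u v) :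
    IsMinorOf (G.contract u v) G := by
  classical
  let ψ : ({v}ᶜ : Set V) → Set V := fun w => if (w : V) = u then {u, v} else {(w : V)}
  have ψ_of_eq : ∀ w : ({v}ᶜ : Set V), (w : V) = u → ψ w = {u, v} := fun _ h => if_pos h
  have ψ_of_ne : ∀ w : ({v}ᶜ : Set V), (w : V) ≠ u → ψ w = {(w : V)} := fun _ h =>
    if_neg h
  have mem_self : ∀ w, (w : V) ∈ ψ w := fun w => by
    by_cases hw : (w : V) = u
    · simp [ψ_of_eq w hw, hw]
    · simp [ψ_of_ne w hw]
  refine ⟨ψ, fun w => ⟨w, mem_self w⟩, fun w => ?_, fun w w' hw => ?_, fun w w' hw => ?_⟩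
  · by_cases hw : (w : V) = u
    · rw [ψ_of_eq w hw]; exact induce_pair_connected_of_adj h
    · rw [ψ_of_ne w hw]; exact .of_subsingleton
  · show Disjoint (ψ w) (ψ w')
    have hne : (w : V) ≠ w' := Subtype.val_injective.ne hw
    have hv : ∀ x : ({v}ᶜ : Set V), (x : V) ≠ v := fun x => x.2
    by_cases hwu : (w : V) = u <;> by_cases hw'u : (w' : V) = u
    · exact absurd (hwu.trans hw'u.symm) hne
    · rw [ψ_of_eq w hwu, ψ_of_ne w' hw'u]
      simp [hv w', hw'u]
    · rw [ψ_of_ne w hwu, ψ_of_eq w' hw'u]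
      simp [hv w, hwu]
    · rw [ψ_of_ne w hwu, ψ_of_ne w' hw'u]
      exact Set.disjoint_singleton.mpr hne
  · rcases contract_adj.mp hw with hadj | ⟨-, ⟨hwu, hvw'⟩ | ⟨hw'u, hvw⟩⟩
    · exact ⟨w, mem_self w, w', mem_self w', hadj⟩
    · exact ⟨v, by simp [ψ_of_eq w hwu], w', mem_self w', hvw'⟩
    · exact ⟨w, mem_self w, v, by simp [ψ_of_eq w' hw'u], hvw.symm⟩

theorem isMinorOf_K4_of_triangle {G : SimpleGraph V} {a b c : V} (hab : G.Adj a b)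
    (hac : G.Adj a c) (hbc : G.Adj b c) {C : Set V} (hC : (G.induce C).Connected)
    (hCT : Disjoint C {a, b, c}) (hattach : ∀ t ∈ ({a, b, c} : Set V), ∃ z ∈ C, G.Adj t z) :
    IsMinorOf (completeGraph (Fin 4)) G := by
  obtain ⟨za, hza, haz⟩ := hattach a (by simp)
  obtain ⟨zb, hzb, hbz⟩ := hattach b (by simp)
  obtain ⟨zc, hzc, hcz⟩ := hattach c (by simp)
  have haC : a ∉ C := fun h => Set.disjoint_left.mp hCT h (by simp)
  have hbC : b ∉ C := fun h => Set.disjoint_left.mp hCT h (by simp)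
  have hcC : c ∉ C := fun h => Set.disjoint_left.mp hCT h (by simp)
  refine ⟨![{a}, {b}, {c}, C], fun i => ?_, fun i => ?_, fun i j hij => ?_, fun i j hij => ?_⟩
  · fin_cases i
    exacts [⟨a, rfl⟩, ⟨b, rfl⟩, ⟨c, rfl⟩, ⟨za, hza⟩]
  · fin_cases i
    exacts [(.of_subsingleton : (G.induce {a}).Connected),
      (.of_subsingleton : (G.induce {b}).Connected),
      (.of_subsingleton : (G.induce {c}).Connected), hC]
  · fin_cases i <;> fin_cases j <;> simp_all [hab.ne, hac.ne, hbc.ne, hab.ne', hac.ne', hbc.ne']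
  · have hCa : ∃ z ∈ C, G.Adj z a := ⟨za, hza, haz.symm⟩
    have hCb : ∃ z ∈ C, G.Adj z b := ⟨zb, hzb, hbz.symm⟩
    have hCc : ∃ z ∈ C, G.Adj z c := ⟨zc, hzc, hcz.symm⟩
    fin_cases i <;> fin_cases j <;> simp_all [hab.symm, hac.symm, hbc.symm]

end Minors

section Dirac

variable {V : Type*}

/-- The invariant of Dirac's induction (a graph of minimum degree three has a `K₄` minor): only
the vertices of a root clique `R` of at most two vertices may have fewer than three neighbours,
and some vertex lies outside `R`. -/
structure DiracRoot (G : SimpleGraph V) (R : Set V) : Prop where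
  isClique : G.IsClique R
  ncard_le_two : R.ncard ≤ 2
  two_lt_ncard : ∀ w ∉ R, 2 < (G.neighborSet w).ncard
  exists_notMem : ∃ w, w ∉ R

variable [Finite V] {G : SimpleGraph V} {R : Set V}

lemma exists_adj_notMem_of_ncard_le_two {w : V} (hw : 2 < (G.neighborSet w).ncard)
    {s : Set V} (hs : s.ncard ≤ 2) : ∃ z, G.Adj w z ∧ z ∉ s := by
  by_contra! h
  have := Set.ncard_le_ncard (show G.neighborSet w ⊆ s from h)
  omega

lemma ncard_preimage_val_le {s : Set V} (t : Set V) :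
    (Subtype.val ⁻¹' t : Set s).ncard ≤ t.ncard :=
  calc (Subtype.val ⁻¹' t : Set s).ncard
      = (Subtype.val '' (Subtype.val ⁻¹' t : Set s)).ncard :=
        (Set.ncard_image_of_injective _ Subtype.val_injective).symm
    _ ≤ t.ncard := Set.ncard_le_ncard (Set.image_preimage_subset _ _)

/-- A vertex adjacent to `v` trades `v` for a new neighbour: `u` itself, or, for `u`, another
neighbour of `v`. Since `v` is in no triangle, that neighbour is indeed new. -/
lemma ncard_neighborSet_le_contract {u v : V} (huv : G.Adj u v)
    (htri : ∀ a b, G.Adj v a → G.Adj v b → ¬ G.Adj a b) (hv : ∃ r, G.Adj v r ∧ r ≠ u)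
    (w : ({v}ᶜ : Set V)) :
    (G.neighborSet w).ncard ≤ ((G.contract u v).neighborSet w).ncard := by
  set N' := (G.contract u v).neighborSet w
  have himage : (Subtype.val '' N').ncard = N'.ncard :=
    Set.ncard_image_of_injective _ Subtype.val_injective
  have hsub : G.neighborSet w \ {v} ⊆ Subtype.val '' N' :=
    fun z ⟨hz, hzv⟩ => ⟨⟨z, hzv⟩, induce_le_contract hz, rfl⟩
  by_cases hwv : G.Adj w v
  · obtain ⟨r, hrN', hr⟩ : ∃ r ∈ Subtype.val '' N', ¬ G.Adj w r := by
      by_cases hwu : (w : V) = u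
      · obtain ⟨r, hvr, hru⟩ := hv
        refine ⟨r, ⟨⟨r, hvr.ne'⟩, ?_, rfl⟩,
          fun hwr => htri u r huv.symm hvr (hwu ▸ hwr)⟩
        exact contract_adj.mpr (Or.inr ⟨hwu ▸ hru.symm, Or.inl ⟨hwu, hvr⟩⟩)
      · refine ⟨u, ⟨⟨u, huv.ne⟩, ?_, rfl⟩, fun hwu' => htri w u hwv.symm huv.symm hwu'⟩
        exact contract_adj.mpr (Or.inr ⟨hwu, Or.inr ⟨rfl, hwv.symm⟩⟩)
    calc (G.neighborSet w).ncard = (insert r (G.neighborSet w \ {v})).ncard :=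
          (Set.ncard_exchange hr hwv).symm
      _ ≤ (Subtype.val '' N').ncard := Set.ncard_le_ncard (Set.insert_subset hrN' hsub)
      _ = N'.ncard := himage
  · calc (G.neighborSet w).ncard = (G.neighborSet w \ {v}).ncard := by
          rw [Set.sdiff_singleton_eq_self (show v ∉ G.neighborSet w from hwv)]
      _ ≤ (Subtype.val '' N').ncard := Set.ncard_le_ncard hsub
      _ = N'.ncard := himage

lemma DiracRoot.contract (hR : DiracRoot G R) {u v : V} (hvR : v ∉ R) (huv : G.Adj u v)
    (htri : ∀ a b, G.Adj v a → G.Adj v b → ¬ G.Adj a b) :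
    DiracRoot (G.contract u v) (Subtype.val ⁻¹' R) where
  isClique _ ha _ hb hab := induce_le_contract (hR.isClique ha hb (Subtype.val_injective.ne hab))
  ncard_le_two := (ncard_preimage_val_le R).trans hR.ncard_le_two
  two_lt_ncard w hw := by
    obtain ⟨r, hvr, hru⟩ :=
      exists_adj_notMem_of_ncard_le_two (hR.two_lt_ncard v hvR) (s := {u}) (by simp)
    exact (hR.two_lt_ncard w hw).trans_le
      (ncard_neighborSet_le_contract huv htri ⟨r, hvr, hru⟩ w)
  exists_notMem := by
    obtain ⟨z, hvz, hzR⟩ :=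
      exists_adj_notMem_of_ncard_le_two (hR.two_lt_ncard v hvR) hR.ncard_le_two
    exact ⟨⟨z, hvz.ne'⟩, hzR⟩

lemma diracRoot_induce {U A : Set V} (hA : G.IsClique A) (hA2 : A.ncard ≤ 2)
    (hU : ∀ w ∈ U, w ∉ A → 2 < (G.neighborSet w).ncard ∧ G.neighborSet w ⊆ U)
    (hUA : ∃ w ∈ U, w ∉ A) :
    DiracRoot (G.induce U) (Subtype.val ⁻¹' A) where
  isClique _ ha _ hb hab := hA ha hb (Subtype.val_injective.ne hab)
  ncard_le_two := (ncard_preimage_val_le A).trans hA2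
  two_lt_ncard w hw := by
    obtain ⟨hdeg, hsub⟩ := hU w w.2 hw
    have : ((G.induce U).neighborSet w).ncard = (G.neighborSet w).ncard :=
      Set.ncard_preimage_of_injective_subset_range (f := (Subtype.val : U → V))
        Subtype.val_injective (by rwa [Subtype.range_coe])
    omega
  exists_notMem := by
    obtain ⟨w, hwU, hwA⟩ := hUA
    exact ⟨⟨w, hwU⟩, hwA⟩

/-- If every component of `G - T` met `R`, they would all be one component (`R` is a clique), so
a vertex of `T` not adjacent to it would have all its neighbours in `T`. It would then lie in
`R`, forcing `R ⊆ T`. -/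
lemma exists_component_disjoint_of_diracRoot (hR : DiracRoot G R) {T : Set V}
    (hT : T.ncard ≤ 3) (hTc : ∃ q, q ∉ T)
    (hdetached : ∀ c : (G.induce Tᶜ).ConnectedComponent,
      ∃ t ∈ T, ∀ z ∈ Subtype.val '' c.supp, ¬ G.Adj t z) :
    ∃ c : (G.induce Tᶜ).ConnectedComponent, Disjoint (Subtype.val '' c.supp) R := by
  by_contra! h
  obtain ⟨q, hq⟩ := hTc
  set c₀ := (G.induce Tᶜ).connectedComponentMk ⟨q, hq⟩
  have meets_root : ∀ c : (G.induce Tᶜ).ConnectedComponent,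
      ∃ r : (Tᶜ : Set V), r ∈ c.supp ∧ (r : V) ∈ R := fun c => by
    obtain ⟨_, ⟨r, hr, rfl⟩, hrR⟩ := Set.not_disjoint_iff.mp (h c)
    exact ⟨r, hr, hrR⟩
  have unique : ∀ c : (G.induce Tᶜ).ConnectedComponent, c = c₀ := fun c => by
    obtain ⟨r, hr, hrR⟩ := meets_root c
    obtain ⟨r₀, hr₀, hr₀R⟩ := meets_root c₀
    rw [← (ConnectedComponent.mem_supp_iff _ _).mp hr,
      ← (ConnectedComponent.mem_supp_iff _ _).mp hr₀]
    by_cases hrr : r = r₀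
    · rw [hrr]
    · exact ConnectedComponent.connectedComponentMk_eq_of_adj
        (hR.isClique hrR hr₀R (Subtype.val_injective.ne hrr))
  obtain ⟨t, htT, ht⟩ := hdetached c₀
  have htN : G.neighborSet t ⊆ T \ {t} := fun z hz =>
    ⟨by_contra fun hzT => ht z ⟨⟨z, hzT⟩, unique _, rfl⟩ hz, hz.ne'⟩
  have htR : t ∈ R := by
    by_contra htR
    obtain ⟨z, htz, hz⟩ := exists_adj_notMem_of_ncard_le_two (hR.two_lt_ncard t htR)
      (s := T \ {t}) (by rw [Set.ncard_sdiff_singleton_of_mem htT]; omega)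
    exact hz (htN htz)
  obtain ⟨r, -, hrR⟩ := meets_root c₀
  apply r.2
  by_cases hrt : (r : V) = t
  · exact hrt ▸ htT
  · exact (htN (hR.isClique htR hrR (Ne.symm hrt))).1

/-- A component of `G - T`, for the triangle `T = {v, u, p}`, that is adjacent to all of `T` gives
a `K₄` minor. Otherwise a component avoiding `R`, together with the vertices of `T` it is
adjacent to (at most two), is a smaller instance. -/
lemma DiracRoot.isMinorOf_K4_or_exists_smaller (hR : DiracRoot G R) {v u p : V} (hvR : v ∉ R)
    (hvu : G.Adj v u) (hvp : G.Adj v p) (hup : G.Adj u p) :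
    IsMinorOf (completeGraph (Fin 4)) G ∨
      ∃ U : Set V, U ≠ Set.univ ∧ ∃ A : Set U, DiracRoot (G.induce U) A := by
  set T : Set V := {v, u, p}
  have hT : G.IsClique T := by
    simp [T, IsClique, Set.pairwise_insert, hvu, hvp, hup, hvu.symm, hvp.symm, hup.symm]
  have hpair : ({u, p} : Set V).ncard ≤ 2 := (Set.ncard_insert_le _ _).trans (by simp)
  have hT3 : T.ncard ≤ 3 := (Set.ncard_insert_le _ _).trans (by omega)
  have outside : ∀ c : (G.induce Tᶜ).ConnectedComponent,
      ∀ z ∈ Subtype.val '' c.supp, z ∉ T := by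
    rintro c _ ⟨z, -, rfl⟩
    exact z.2
  by_cases hattached : ∃ c : (G.induce Tᶜ).ConnectedComponent,
      ∀ t ∈ T, ∃ z ∈ Subtype.val '' c.supp, G.Adj t z
  · obtain ⟨c, hc⟩ := hattached
    exact .inl (isMinorOf_K4_of_triangle hvu hvp hup
      (connected_induce_image_val c.connected_toSimpleGraph)
      (Set.disjoint_left.mpr (outside c)) hc)
  push Not at hattached
  obtain ⟨q, hvq, hq⟩ := exists_adj_notMem_of_ncard_le_two (hR.two_lt_ncard v hvR) hpair
  have hqT : q ∉ T := by
    rintro (rfl | hq')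
    exacts [hvq.ne rfl, hq hq']
  obtain ⟨c, hcR⟩ := exists_component_disjoint_of_diracRoot hR hT3 ⟨q, hqT⟩ hattached
  obtain ⟨t, htT, ht⟩ := hattached c
  set C := Subtype.val '' c.supp
  set A : Set V := {t ∈ T | ∃ z ∈ C, G.Adj t z}
  have htU : t ∉ C ∪ A := by
    rintro (htC | ⟨-, z, hz, htz⟩)
    exacts [outside c t htC htT, ht z hz htz]
  refine .inr ⟨C ∪ A, fun h => htU (h ▸ Set.mem_univ t), _,
    diracRoot_induce (A := A) (hT.subset fun _ h => h.1) ?_ ?_ ?_⟩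
  · have hAT : A ⊂ T :=
      (Set.ssubset_iff_of_subset fun _ h => h.1).mpr ⟨t, htT, fun h => htU (.inr h)⟩
    have := Set.ncard_lt_ncard hAT
    omega
  · intro w hw hwA
    have hwC : w ∈ C := hw.resolve_right hwA
    refine ⟨hR.two_lt_ncard w (Set.disjoint_left.mp hcR hwC), fun z hwz => ?_⟩
    by_cases hzT : z ∈ T
    · exact .inr ⟨hzT, w, hwC, hwz.symm⟩
    · obtain ⟨w', hw', rfl⟩ := hwC
      refine .inl ⟨⟨z, hzT⟩, ?_, rfl⟩
      rw [ConnectedComponent.mem_supp_iff] at hw' ⊢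
      rw [← hw']
      exact (ConnectedComponent.connectedComponentMk_eq_of_adj (by exact hwz)).symm
  · obtain ⟨x, hx⟩ := c.nonempty_supp
    exact ⟨x, .inl ⟨x, hx, rfl⟩, fun hxA => x.2 hxA.1⟩

end Dirac

theorem DiracRoot.isMinorOf_K4 {V : Type*} [Finite V] {G : SimpleGraph V} {R : Set V}
    (hR : DiracRoot G R) : IsMinorOf (completeGraph (Fin 4)) G := by
  induction hn : Nat.card V using Nat.strong_induction_on generalizing V with
  | _ n ih =>
  have card_lt : ∀ {U : Set V}, U ≠ Set.univ → Nat.card U < n := fun hU =>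
    hn ▸ Set.ncard_lt_card hU
  obtain ⟨v, hvR⟩ := hR.exists_notMem
  by_cases htri : ∃ u p, G.Adj v u ∧ G.Adj v p ∧ G.Adj u p
  · obtain ⟨u, p, hvu, hvp, hup⟩ := htri
    rcases hR.isMinorOf_K4_or_exists_smaller hvR hvu hvp hup with hK4 | ⟨U, hU, A, hA⟩
    · exact hK4
    · exact (ih _ (card_lt hU) hA rfl).trans (isMinorOf_induce G U)
  · push Not at htri
    obtain ⟨u, hvu, -⟩ :=
      exists_adj_notMem_of_ncard_le_two (hR.two_lt_ncard v hvR) (s := ∅) (by simp)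
    have hU : ({v}ᶜ : Set V) ≠ Set.univ :=
      (Set.ne_univ_iff_exists_notMem _).mpr ⟨v, by simp⟩
    exact (ih _ (card_lt hU) (hR.contract hvR hvu.symm htri) rfl).trans
      (isMinorOf_contract hvu.symm)

theorem exists_ncard_neighborSet_le_two {V : Type*} [Finite V] [Nonempty V]
    {G : SimpleGraph V} (h : ¬ IsMinorOf (completeGraph (Fin 4)) G) :
    ∃ v, (G.neighborSet v).ncard ≤ 2 := by
  by_contra! hdeg
  exact h (DiracRoot.isMinorOf_K4 (R := ∅)
    ⟨Set.pairwise_empty _, by simp, fun w _ => hdeg w, ⟨Classical.arbitrary V, id⟩⟩)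

section Coloring

variable {V : Type*} [Finite V] {G : SimpleGraph V}

theorem exists_isMinorOf_compl_singleton {v : V} (hv : (G.neighborSet v).ncard ≤ 2) :
    ∃ G' : SimpleGraph ({v}ᶜ : Set V), IsMinorOf G' G ∧ G.induce {v}ᶜ ≤ G' ∧
      G'.IsClique (Subtype.val ⁻¹' G.neighborSet v) := by
  by_cases hnbr : ∃ u, G.Adj v u
  · obtain ⟨u, hvu⟩ := hnbr
    refine ⟨G.contract u v, isMinorOf_contract hvu.symm, induce_le_contract, ?_⟩
    have hrest : (G.neighborSet v \ {u}).Subsingleton := by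
      rw [← Set.ncard_le_one_iff_subsingleton,
        Set.ncard_sdiff_singleton_of_mem (show u ∈ G.neighborSet v from hvu)]
      omega
    intro a ha b hb hab
    have hne : (a : V) ≠ b := Subtype.val_injective.ne hab
    by_cases hau : (a : V) = u
    · exact contract_adj.mpr (.inr ⟨hne, .inl ⟨hau, hb⟩⟩)
    by_cases hbu : (b : V) = u
    · exact contract_adj.mpr (.inr ⟨hne, .inr ⟨hbu, ha⟩⟩)
    exact absurd (hrest ⟨ha, hau⟩ ⟨hb, hbu⟩) hne
  · push Not at hnbr
    exact ⟨G.induce {v}ᶜ, isMinorOf_induce G _, le_rfl, fun a ha => absurd ha (hnbr a)⟩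

theorem AcyclicColoring.extend {v : V} {G' : SimpleGraph ({v}ᶜ : Set V)}
    {f' : ({v}ᶜ : Set V) → Fin 3} (hf' : AcyclicColoring G' f')
    (hv : (G.neighborSet v).ncard ≤ 2) (hle : G.induce {v}ᶜ ≤ G')
    (hcl : G'.IsClique (Subtype.val ⁻¹' G.neighborSet v)) :
    ∃ f : V → Fin 3, AcyclicColoring G f := by
  classical
  obtain ⟨c, hc⟩ : ∃ c, c ∉ f' '' (Subtype.val ⁻¹' G.neighborSet v) := by
    by_contra! h
    have := calc Nat.card (Fin 3) = (Set.univ : Set (Fin 3)).ncard := (Set.ncard_univ _).symm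
      _ ≤ (f' '' (Subtype.val ⁻¹' G.neighborSet v)).ncard := Set.ncard_le_ncard fun c _ => h c
      _ ≤ (Subtype.val ⁻¹' G.neighborSet v : Set ({v}ᶜ : Set V)).ncard := Set.ncard_image_le
      _ ≤ 2 := (ncard_preimage_val_le _).trans hv
    simp at this
  let f : V → Fin 3 := fun w => if h : w = v then c else f' ⟨w, h⟩
  have hfv : f v = c := dif_pos rfl
  have hfw : ∀ w : ({v}ᶜ : Set V), f w = f' w := fun w => dif_neg w.2
  have hvw : ∀ w : ({v}ᶜ : Set V), G.Adj v w → f v ≠ f w := fun w hw h =>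
    hc ⟨w, hw, by rw [← hfw, ← h, hfv]⟩
  refine ⟨f, fun a b hab => ?_, fun a p hp ⟨α, β, hαβ⟩ => ?_⟩
  · by_cases ha : a = v
    · subst ha
      exact hvw ⟨b, hab.ne'⟩ hab
    by_cases hb : b = v
    · subst hb
      exact (hvw ⟨a, ha⟩ hab.symm).symm
    rw [hfw ⟨a, ha⟩, hfw ⟨b, hb⟩]
    exact hf'.1 (hle (show (G.induce {v}ᶜ).Adj ⟨a, ha⟩ ⟨b, hb⟩ from hab))
  by_cases hvp : v ∈ p.support
  · obtain ⟨b, b', hbb', hvb, hvb', hb, hb'⟩ := hp.exists_adj_adj_of_mem_support hvp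
    have h₁ := hvw ⟨b, hvb.ne'⟩ hvb
    have h₂ := hvw ⟨b', hvb'.ne'⟩ hvb'
    have h₃ : f b ≠ f b' := by
      rw [hfw ⟨b, hvb.ne'⟩, hfw ⟨b', hvb'.ne'⟩]
      exact hf'.1 (hcl hvb hvb' fun h => hbb' (congrArg Subtype.val h))
    have := hαβ v hvp
    have := hαβ b hb
    have := hαβ b' hb'
    grind
  · obtain ⟨_, q, hq, hqp⟩ :=
      hp.exists_isCycle_of_induce_le hle fun x hx (hxv : x = v) => hvp (hxv ▸ hx)
    exact hf'.2 q hq ⟨α, β, fun x hx => hfw x ▸ hαβ x (hqp x hx)⟩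

end Coloring

theorem exists_acyclicColoring_fin3 {V : Type*} [Finite V] {G : SimpleGraph V}
    (h : ¬ IsMinorOf (completeGraph (Fin 4)) G) : ∃ f : V → Fin 3, AcyclicColoring G f := by
  induction hn : Nat.card V using Nat.strong_induction_on generalizing V with
  | _ n ih =>
  cases isEmpty_or_nonempty V
  · exact ⟨isEmptyElim, fun a => isEmptyElim a, fun a => isEmptyElim a⟩
  obtain ⟨v, hv⟩ := exists_ncard_neighborSet_le_two h
  obtain ⟨G', hG', hle, hcl⟩ := exists_isMinorOf_compl_singleton hv
  have hU : ({v}ᶜ : Set V) ≠ Set.univ := (Set.ne_univ_iff_exists_notMem _).mpr ⟨v, by simp⟩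
  obtain ⟨f', hf'⟩ := ih _ (hn ▸ Set.ncard_lt_card hU) (fun hK4 => h (hK4.trans hG')) rfl
  exact hf'.extend hv hle hcl

lemma fin3_neg_add_ne_left : ∀ a b : Fin 3, a ≠ b → -(a + b) ≠ a := by decide

lemma fin3_eq_add_one_or_eq_add_two : ∀ m x : Fin 3, x ≠ m → x = m + 1 ∨ x = m + 2 := by
  decide

/-- In `Fin 3`, `-(i + j)` is the colour different from both `i` and `j` when `i ≠ j`. -/
def missingColor {V : Type*} (f : V → Fin 3) : Sym2 V → Fin 3 :=
  Sym2.lift ⟨fun a b => -(f a + f b), fun a b => congrArg Neg.neg (add_comm (f a) (f b))⟩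

theorem AcyclicColoring.stronglyWoody_missingColor {V : Type*} {G : SimpleGraph V}
    {f : V → Fin 3} (hf : AcyclicColoring G f) : StronglyWoody G (missingColor f) := by
  rintro x y p hp hlen hxy ⟨m, hm⟩
  have avoid : ∀ w ∈ p.support, f w ≠ m := by
    intro w hw
    obtain ⟨e, he, hwe⟩ := (Walk.mem_support_iff_exists_mem_edges_of_not_nil
      (Walk.not_nil_iff_lt_length.mpr (by omega))).mp hw
    induction e using Sym2.ind with
    | _ a b =>
    have hab := p.adj_of_mem_edges he
    have hcol : -(f a + f b) = m := hm _ he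
    rcases Sym2.mem_iff.mp hwe with rfl | rfl
    · exact hcol ▸ (fin3_neg_add_ne_left _ _ (hf.1 hab)).symm
    · exact hcol ▸ add_comm (f w) (f a) ▸ (fin3_neg_add_ne_left _ _ (hf.1 hab.symm)).symm
  have hcyc : (Walk.cons hxy.symm p).IsCycle := by
    refine (Walk.cons_isCycle_iff p hxy.symm).mpr ⟨hp, fun h => ?_⟩
    have := hp.length_eq_one_of_mem_edges (Sym2.eq_swap ▸ h)
    omega
  refine hf.2 _ hcyc ⟨m + 1, m + 2, fun z hz => fin3_eq_add_one_or_eq_add_two _ _ (avoid z ?_)⟩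
  rw [Walk.support_cons, List.mem_cons] at hz
  rcases hz with rfl | hz
  exacts [p.end_mem_support, hz]

/-- Every outerplanar graph has strong arboricity at most 3. -/
theorem stmt3 {V : Type*} [Fintype V] (G : SimpleGraph V) (hG : Outerplanar G) :
    strongArboricity G ≤ 3 := by
  obtain ⟨f, hf⟩ := exists_acyclicColoring_fin3 hG.1
  exact Nat.sInf_le ⟨_, hf.stronglyWoody_missingColor⟩
end

section
/- Every graph G satisfies ζ(G) ≤ 2·χ(G)·arb(G), where ζ is the strong arboricity, χ the chromatic number, and arb the arboricity. -/
open SimpleGraph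

/-! Colour each edge `uv` by the triple `(f u + f v, c uv, s uv)`, where `f` is a proper vertex
colouring with `χ` colours, `c` splits the edges into `arb` forests, and `s` shades each forest by
the parity of the depth of the upper end of the edge in a rooted copy of that forest.
A monochromatic broken cycle with two edges closes a triangle `uvw` with `f u + f v = f v + f w`,
so `f u = f w` although `uw` is an edge. A longer one starts with three edges of one forest with
the same shade, which a rooted forest does not contain: such a walk would go monotonically up or
down, or enter a vertex twice from below. -/

section

variable {V α : Type*}

def RainbowTriangles (G : SimpleGraph V) (c : Sym2 V → α) : Prop :=
  ∀ ⦃x y z : V⦄, G.Adj x y → G.Adj y z → G.Adj z x → c s(x, y) ≠ c s(y, z)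

/-- `x₀ = x₃` is allowed, so this also forbids monochromatic triangles. -/
def NoMonochromaticThreeEdgeTrail (G : SimpleGraph V) (c : Sym2 V → α) : Prop :=
  ∀ ⦃x₀ x₁ x₂ x₃ : V⦄, G.Adj x₀ x₁ → G.Adj x₁ x₂ → G.Adj x₂ x₃ → x₀ ≠ x₂ → x₁ ≠ x₃ →
    c s(x₀, x₁) = c s(x₁, x₂) → c s(x₁, x₂) ≠ c s(x₂, x₃)

section

variable {G : SimpleGraph V} {c : Sym2 V → α}

lemma RainbowTriangles.of_comp {β : Type*} {φ : α → β} (h : RainbowTriangles G (φ ∘ c)) :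
    RainbowTriangles G c :=
  fun _ _ _ hxy hyz hzx he => h hxy hyz hzx (congrArg φ he)

lemma NoMonochromaticThreeEdgeTrail.of_comp {β : Type*} {φ : α → β}
    (h : NoMonochromaticThreeEdgeTrail G (φ ∘ c)) : NoMonochromaticThreeEdgeTrail G c :=
  fun _ _ _ _ h₀₁ h₁₂ h₂₃ h₀₂ h₁₃ he he' => h h₀₁ h₁₂ h₂₃ h₀₂ h₁₃ (congrArg φ he) (congrArg φ he')

lemma StronglyWoody.of_rainbowTriangles (h₃ : RainbowTriangles G c)
    (h₄ : NoMonochromaticThreeEdgeTrail G c) : StronglyWoody G c := by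
  rintro u v (_ | ⟨h₀₁, _ | ⟨h₁₂, _ | ⟨h₂₃, q⟩⟩⟩) hp hlen huv ⟨a, ha⟩
  · simp at hlen
  · simp at hlen
  · exact h₃ h₀₁ h₁₂ huv.symm ((ha _ (by simp)).trans (ha _ (by simp)).symm)
  · simp only [Walk.cons_isPath_iff, Walk.support_cons, List.mem_cons, not_or] at hp
    exact h₄ h₀₁ h₁₂ h₂₃ hp.2.2.1 (fun h => hp.1.2.2 (h ▸ q.start_mem_support))
      ((ha _ (by simp)).trans (ha _ (by simp)).symm)
      ((ha _ (by simp)).trans (ha _ (by simp)).symm)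

lemma strongArboricity_le_card [Fintype α] (hc : StronglyWoody G c) :
    strongArboricity G ≤ Fintype.card α := by
  let e := Fintype.equivFin α
  refine Nat.sInf_le ⟨e ∘ c, fun u v p hp hlen huv ⟨a, ha⟩ => hc p hp hlen huv ⟨e.symm a, ?_⟩⟩
  intro x hx
  simp [← ha x hx]

lemma woody_of_injective (hc : Function.Injective c) : Woody G c := by
  intro u p hp ⟨a, ha⟩
  have hnd := hp.edges_nodup.map hc
  rw [List.eq_replicate_iff.mpr (⟨rfl, by simpa using ha⟩ : _ ∧ ∀ b ∈ p.edges.map c, b = a),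
    List.nodup_replicate] at hnd
  have := hp.three_le_length
  simp only [List.length_map, Walk.length_edges] at hnd
  omega

end

def vertexSumColoring {A : Type*} [AddCommMagma A] (f : V → A) : Sym2 V → A :=
  Sym2.lift ⟨fun u v => f u + f v, fun _ _ => add_comm _ _⟩

lemma ProperColoring.rainbowTriangles_vertexSumColoring {A : Type*} [AddCommSemigroup A]
    [IsRightCancelAdd A] {G : SimpleGraph V} {f : V → A} (hf : ProperColoring G f) :
    RainbowTriangles G (vertexSumColoring f) := by
  intro x y z _ _ hzx he
  simp only [vertexSumColoring, Sym2.lift_mk, add_comm (f y)] at he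
  exact hf hzx (add_right_cancel he).symm

namespace SimpleGraph

lemma IsAcyclic.eq_of_adj_of_dist_add_one {G : SimpleGraph V} (hG : G.IsAcyclic) {r v w x : V}
    (hv : G.Adj v x) (hw : G.Adj w x) (hrv : G.Reachable r v) (hrw : G.Reachable r w)
    (hdv : G.dist r v + 1 = G.dist r x) (hdw : G.dist r w + 1 = G.dist r x) : v = w := by
  classical
  obtain ⟨q, hq, -⟩ := (hrv.trans hv.reachable).exists_path_of_dist
  suffices key : ∀ {y}, G.Adj y x → G.Reachable r y → G.dist r y + 1 = G.dist r x →
      y = q.penultimate from (key hv hrv hdv).trans (key hw hrw hdw).symm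
  intro y hy hry hdy
  obtain ⟨p, hp, hpl⟩ := hry.exists_path_of_dist
  have hx : x ∉ p.support := fun hx => by
    have := (dist_le (p.takeUntil x hx)).trans (p.length_takeUntil_le_length hx)
    omega
  rw [hG.path_concat hp hq hy (hG.mem_support_of_ne_mem_support_of_adj_of_isPath hq hp hy.symm hx),
    Walk.penultimate_concat]

end SimpleGraph

/-- The depth function of a rooted forest: each vertex has at most one neighbour one level up. -/
structure IsDepth (H : SimpleGraph V) (d : V → ℕ) : Prop where
  adj : ∀ ⦃u v⦄, H.Adj u v → d u = d v + 1 ∨ d v = d u + 1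
  parent_unique : ∀ ⦃v w x⦄, H.Adj v x → H.Adj w x → d v + 1 = d x → d w + 1 = d x → v = w

lemma SimpleGraph.IsAcyclic.exists_isDepth {H : SimpleGraph V} (hH : H.IsAcyclic) :
    ∃ d, IsDepth H d := by
  let root (v : V) : V := (H.connectedComponentMk v).out
  have reach (v : V) : H.Reachable (root v) v := ConnectedComponent.exact (Quot.out_eq _)
  have root_eq {u v : V} (h : H.Reachable u v) : root u = root v :=
    congrArg Quot.out (ConnectedComponent.sound h)
  refine ⟨fun v => H.dist (root v) v, fun u v huv => ?_, fun v w x hv hw hdv hdw => ?_⟩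
  · rw [root_eq huv.reachable]
    exact hH.dist_eq_dist_add_one_of_adj_of_reachable _ huv (root_eq huv.reachable ▸ reach u)
  · have hx : root x = root v := root_eq (hv.reachable.symm)
    have hw' : root w = root v := (root_eq hw.reachable).trans hx
    simp only [hx, hw'] at hdv hdw
    exact hH.eq_of_adj_of_dist_add_one hv hw (reach v) (hw' ▸ reach w) hdv hdw

def depthShade (d : V → ℕ) (e : Sym2 V) : ZMod 2 :=
  (e.map d).inf

lemma IsDepth.noMonochromaticThreeEdgeTrail_depthShade {H : SimpleGraph V} {d : V → ℕ}
    (hd : IsDepth H d) : NoMonochromaticThreeEdgeTrail H (depthShade d) := by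
  intro x₀ x₁ x₂ x₃ h₀₁ h₁₂ h₂₃ h₀₂ h₁₃ he he'
  simp only [depthShade, Sym2.map_mk, Sym2.inf_mk, ZMod.natCast_eq_natCast_iff'] at he he'
  rcases hd.adj h₀₁ with h | h <;> rcases hd.adj h₁₂ with h' | h'
  · omega
  · rcases hd.adj h₂₃ with h'' | h''
    · exact h₁₃ (hd.parent_unique h₁₂ h₂₃.symm (by omega) (by omega))
    · omega
  · exact h₀₂ (hd.parent_unique h₀₁ h₁₂.symm (by omega) (by omega))
  · omega

def colorClass (G : SimpleGraph V) (c : Sym2 V → α) (i : α) : SimpleGraph V where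
  Adj u v := G.Adj u v ∧ c s(u, v) = i
  symm := ⟨fun _ _ h => ⟨h.1.symm, Sym2.eq_swap ▸ h.2⟩⟩

@[simp]
lemma colorClass_adj {G : SimpleGraph V} {c : Sym2 V → α} {i : α} {u v : V} :
    (colorClass G c i).Adj u v ↔ G.Adj u v ∧ c s(u, v) = i :=
  Iff.rfl

lemma Woody.isAcyclic_colorClass {G : SimpleGraph V} {c : Sym2 V → α} (hc : Woody G c) (i : α) :
    (colorClass G c i).IsAcyclic := by
  intro u p hp
  have hle : colorClass G c i ≤ G := fun _ _ h => (colorClass_adj.mp h).1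
  refine hc (p.mapLe hle) (hp.mapLe hle) ⟨i, fun e he => ?_⟩
  rw [Walk.edges_mapLe_eq_edges] at he
  induction e using Sym2.ind with
  | _ x y => exact (colorClass_adj.mp (p.edges_subset_edgeSet he)).2

lemma Woody.exists_noMonochromaticThreeEdgeTrail_prod {G : SimpleGraph V} {c : Sym2 V → α}
    (hc : Woody G c) : ∃ s : Sym2 V → ZMod 2,
      NoMonochromaticThreeEdgeTrail G (fun e => (c e, s e)) := by
  choose d hd using fun i => (hc.isAcyclic_colorClass i).exists_isDepth
  refine ⟨fun e => depthShade (d (c e)) e, fun x₀ x₁ x₂ x₃ h₀₁ h₁₂ h₂₃ h₀₂ h₁₃ he he' => ?_⟩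
  obtain ⟨hc₁, hs₁⟩ := Prod.mk.inj he
  obtain ⟨hc₂, hs₂⟩ := Prod.mk.inj he'
  dsimp only at hs₁ hs₂
  rw [hc₁] at hs₁
  rw [← hc₂] at hs₂
  exact (hd _).noMonochromaticThreeEdgeTrail_depthShade (colorClass_adj.mpr ⟨h₀₁, hc₁⟩)
    (colorClass_adj.mpr ⟨h₁₂, rfl⟩) (colorClass_adj.mpr ⟨h₂₃, hc₂.symm⟩) h₀₂ h₁₃ hs₁ hs₂

lemma exists_properColoring_chromNum [Finite V] (G : SimpleGraph V) :
    ∃ f : V → Fin (chromNum G), ProperColoring G f :=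
  Nat.sInf_mem (s := {k | ∃ f : V → Fin k, ProperColoring G f})
    ⟨_, Finite.equivFin V, fun _ _ h he => h.ne ((Finite.equivFin V).injective he)⟩

lemma exists_woody_arboricity [Finite V] (G : SimpleGraph V) :
    ∃ c : Sym2 V → Fin (arboricity G), Woody G c :=
  Nat.sInf_mem (s := {k | ∃ c : Sym2 V → Fin k, Woody G c})
    ⟨_, Finite.equivFin (Sym2 V), woody_of_injective (Finite.equivFin _).injective⟩

end

/-- Every graph satisfies ζ(G) ≤ 2 · χ(G) · arb(G). -/
theorem stmt8 {V : Type*} [Fintype V] (G : SimpleGraph V) :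
    strongArboricity G ≤ 2 * chromNum G * arboricity G := by
  obtain ⟨f, hf⟩ := exists_properColoring_chromNum G
  obtain ⟨c, hc⟩ := exists_woody_arboricity G
  obtain ⟨s, hs⟩ := hc.exists_noMonochromaticThreeEdgeTrail_prod
  have hsw : StronglyWoody G fun e => (vertexSumColoring f e, c e, s e) :=
    .of_rainbowTriangles (hf.rainbowTriangles_vertexSumColoring.of_comp (φ := Prod.fst))
      (hs.of_comp (φ := Prod.snd))
  calc strongArboricity G ≤ Fintype.card (Fin (chromNum G) × Fin (arboricity G) × ZMod 2) :=
        strongArboricity_le_card hsw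
    _ = 2 * chromNum G * arboricity G := by
      simp only [Fintype.card_prod, Fintype.card_fin, ZMod.card]
      ring
end

section
/- Any strongly woody edge coloring of the complete graph K_n (n ≥ 3) is a proper edge coloring; consequently ζ(K_n) = χ'(K_n), the chromatic index of K_n. -/
open SimpleGraph

lemma sw_to_proper {n : ℕ} {α : Type*} (c : Sym2 (Fin n) → α)
    (h : StronglyWoody (completeGraph (Fin n)) c) :
    ProperEdgeColoring (completeGraph (Fin n)) c := by
  intro u v w huv hvw huw hc
  have hadj : (completeGraph (Fin n)).Adj u w := huw
  set p : (completeGraph (Fin n)).Walk u w :=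
    SimpleGraph.Walk.cons huv (SimpleGraph.Walk.cons hvw SimpleGraph.Walk.nil) with hp
  have hpath : p.IsPath := by
    rw [hp]
    apply SimpleGraph.Walk.IsPath.cons
    · apply SimpleGraph.Walk.IsPath.cons (SimpleGraph.Walk.IsPath.nil)
      simp [hvw.ne]
    · simp [huv.ne, huw]
  refine h p hpath (by simp [hp]) hadj ⟨c s(u, v), ?_⟩
  intro e he
  simp [hp, SimpleGraph.Walk.edges] at he
  rcases he with he | he <;> simp [he, hc]

lemma proper_to_sw {V : Type*} {α : Type*} {G : SimpleGraph V} (c : Sym2 V → α)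
    (h : ProperEdgeColoring G c) : StronglyWoody G c := by
  intro u v p hpath hlen hadj hmono
  obtain ⟨a, ha⟩ := hmono
  cases p with
  | nil => simp at hlen
  | cons huv q =>
    cases q with
    | nil => simp at hlen
    | @cons b w _ hvw r =>
      rename_i v'
      have hnodup := hpath.support_nodup
      simp [SimpleGraph.Walk.support_cons] at hnodup
      have huw : u ≠ w := by
        intro he; subst he
        simp at hnodup
      have h1 : c s(u, v') = a := ha _ (by simp)
      have h2 : c s(v', w) = a := ha _ (by simp)
      exact h huv hvw huw (h1.trans h2.symm)

/-- Any strongly woody edge coloring of `K n` (n ≥ 3) is a proper edge coloring;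
consequently ζ(Kₙ) = χ'(Kₙ). -/
theorem stmt14 (n : ℕ) (hn : 3 ≤ n) :
    (∀ (α : Type) (c : Sym2 (Fin n) → α),
      StronglyWoody (completeGraph (Fin n)) c →
        ProperEdgeColoring (completeGraph (Fin n)) c) ∧
    strongArboricity (completeGraph (Fin n)) = edgeChromNum (completeGraph (Fin n)) := by
  constructor
  · intro α c hc
    exact sw_to_proper c hc
  · unfold strongArboricity edgeChromNum
    congr 1
    ext k
    exact ⟨fun ⟨c, hc⟩ => ⟨c, sw_to_proper c hc⟩,
      fun ⟨c, hc⟩ => ⟨c, proper_to_sw c hc⟩⟩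
end
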